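/- arXiv:1901.08622 — 2 statements merged into one kernel-verified Lean document; each statement's English description precedes it below -/
import Mathlib

section
/- Five hyperplanes cannot separate the 32 points γ₅(1), γ₅(2), ..., γ₅(32) on the moment curve in ℝ⁵ into distinct open cells: for any nonzero linear functionals f₁, ..., f₅ : ℝ⁵ → ℝ and reals c₁, ..., c₅ such that fᵢ(γ₅(j)) ≠ cᵢ for all i ∈ {1,...,5} and all j ∈ {1,...,32}, there exist distinct j, k ∈ {1,...,32} such that for every i ∈ {1,...,5}, the numbers fᵢ(γ₅(j)) − cᵢ and fᵢ(γ₅(k)) − cᵢ have the same sign (both strictly positive or both strictly negative). -/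
/-!
Each map `t ↦ fᵢ(γ₅(t)) - cᵢ` is a nonzero real polynomial of degree at most 5, so by the
intermediate value theorem it changes sign on at most 5 of the 31 consecutive pairs `(j, j + 1)`,
`1 ≤ j ≤ 31`. The five hyperplanes therefore separate at most 25 of these pairs, and the two points
of any remaining pair lie in the same open cell.
-/

noncomputable def momentCurve (d : ℕ) : ℝ → (Fin d → ℝ) :=
  fun t i => t ^ (i.val + 1)

open Polynomial Finset

namespace Polynomial

theorem exists_isRoot_mem_Ioo_of_eval_mul_neg (p : ℝ[X]) {a b : ℝ} (hab : a ≤ b)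
    (h : p.eval a * p.eval b < 0) : ∃ t ∈ Set.Ioo a b, p.IsRoot t := by
  have hcont : ContinuousOn (fun t => p.eval t) (Set.Icc a b) := p.continuous.continuousOn
  rcases mul_neg_iff.mp h with ⟨ha, hb⟩ | ⟨ha, hb⟩
  · exact intermediate_value_Ioo' hab hcont ⟨hb, ha⟩
  · exact intermediate_value_Ioo hab hcont ⟨ha, hb⟩

theorem card_filter_eval_mul_neg_le_natDegree {p : ℝ[X]} (hp : p ≠ 0) {x : ℕ → ℝ}
    (hx : StrictMono x) (S : Finset ℕ) :
    #{j ∈ S | p.eval (x j) * p.eval (x (j + 1)) < 0} ≤ p.natDegree := by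
  classical
  choose! r hr using fun j (hj : j ∈ {j ∈ S | p.eval (x j) * p.eval (x (j + 1)) < 0}) =>
    p.exists_isRoot_mem_Ioo_of_eval_mul_neg (hx (Nat.lt_succ_self j)).le (mem_filter.mp hj).2
  -- the intervals `(x j, x (j + 1))` are pairwise disjoint
  have hr_inj : Set.InjOn r ({j ∈ S | p.eval (x j) * p.eval (x (j + 1)) < 0} : Finset ℕ) := by
    intro j hj k hk hjk
    have hrj := (hr j hj).1
    have hrk := (hr k hk).1
    by_contra hne
    rcases Nat.lt_or_gt_of_ne hne with h | h
    · have := hx.monotone (Nat.succ_le_of_lt h)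
      linarith [hrj.2, hrk.1]
    · have := hx.monotone (Nat.succ_le_of_lt h)
      linarith [hrj.1, hrk.2]
  calc _ ≤ #p.roots.toFinset :=
        card_le_card_of_injOn r (fun j hj => by simpa [hp] using (hr j hj).2) hr_inj
    _ ≤ Multiset.card p.roots := Multiset.toFinset_card_le _
    _ ≤ p.natDegree := p.card_roots'

theorem exists_forall_eval_mul_nonneg {ι : Type*} [Fintype ι] {p : ι → ℝ[X]}
    (hp : ∀ i, p i ≠ 0) {n : ℕ} (hn : ∀ i, (p i).natDegree ≤ n) {x : ℕ → ℝ}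
    (hx : StrictMono x) {S : Finset ℕ} (hS : Fintype.card ι * n < #S) :
    ∃ j ∈ S, ∀ i, 0 ≤ (p i).eval (x j) * (p i).eval (x (j + 1)) := by
  classical
  let signChanges := univ.biUnion fun i => {j ∈ S | (p i).eval (x j) * (p i).eval (x (j + 1)) < 0}
  have hsignChanges : #signChanges < #S := calc
    #signChanges ≤ ∑ i, #{j ∈ S | (p i).eval (x j) * (p i).eval (x (j + 1)) < 0} := card_biUnion_le
    _ ≤ ∑ _i : ι, n := sum_le_sum fun i _ =>
        (card_filter_eval_mul_neg_le_natDegree (hp i) hx S).trans (hn i)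
    _ < #S := by simpa using hS
  obtain ⟨j, hjS, hj⟩ := exists_mem_notMem_of_card_lt_card hsignChanges
  refine ⟨j, hjS, fun i => not_lt.mp fun hneg => hj ?_⟩
  exact mem_biUnion.mpr ⟨i, mem_univ i, mem_filter.mpr ⟨hjS, hneg⟩⟩

end Polynomial

section MomentCurve

variable {d : ℕ} (f : (Fin d → ℝ) →ₗ[ℝ] ℝ) (c : ℝ)

noncomputable def momentPolynomial : ℝ[X] :=
  ∑ k : Fin d, C (f (Pi.single k 1)) * X ^ (k.val + 1) - C c

theorem eval_momentPolynomial (t : ℝ) :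
    (momentPolynomial f c).eval t = f (momentCurve d t) - c := by
  have hγ : momentCurve d t = ∑ k : Fin d, t ^ (k.val + 1) • Pi.single k 1 := by
    ext m; simp [momentCurve, Pi.single_apply]
  simp only [momentPolynomial, hγ, map_sum, map_smul, eval_sub, eval_finsetSum, eval_mul, eval_C,
    eval_pow, eval_X, smul_eq_mul, mul_comm]

theorem coeff_momentPolynomial_succ (k : Fin d) :
    (momentPolynomial f c).coeff (k.val + 1) = f (Pi.single k 1) := by
  simp [momentPolynomial, Fin.val_inj]

theorem momentPolynomial_ne_zero (hf : f ≠ 0) : momentPolynomial f c ≠ 0 := by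
  intro h
  refine hf ((Pi.basisFun ℝ (Fin d)).ext fun k => ?_)
  simpa [h] using (coeff_momentPolynomial_succ f c k).symm

theorem natDegree_momentPolynomial_le : (momentPolynomial f c).natDegree ≤ d := by
  refine (natDegree_sub_le _ _).trans (max_le ?_ ((natDegree_C c).trans_le d.zero_le))
  refine natDegree_sum_le_of_forall_le _ _ fun k _ => (natDegree_C_mul_le _ _).trans ?_
  simp

end MomentCurve

/-- Five hyperplanes cannot separate the 32 points `γ₅(1), …, γ₅(32)` on the
moment curve in ℝ⁵ into distinct open cells. -/
theorem five_hyperplanes_cannot_separate_32_moment_points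
    (f : Fin 5 → ((Fin 5 → ℝ) →ₗ[ℝ] ℝ)) (hf : ∀ i, f i ≠ 0) (c : Fin 5 → ℝ)
    (havoid : ∀ i : Fin 5, ∀ j ∈ Finset.Icc (1 : ℕ) 32,
      f i (momentCurve 5 (j : ℝ)) ≠ c i) :
    ∃ j ∈ Finset.Icc (1 : ℕ) 32, ∃ k ∈ Finset.Icc (1 : ℕ) 32, j ≠ k ∧
      ∀ i : Fin 5,
        (0 < f i (momentCurve 5 (j : ℝ)) - c i ∧
          0 < f i (momentCurve 5 (k : ℝ)) - c i) ∨
        (f i (momentCurve 5 (j : ℝ)) - c i < 0 ∧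
          f i (momentCurve 5 (k : ℝ)) - c i < 0) := by
  obtain ⟨j, hj, hsame⟩ := exists_forall_eval_mul_nonneg
    (p := fun i => momentPolynomial (f i) (c i)) (fun i => momentPolynomial_ne_zero _ _ (hf i))
    (fun i => natDegree_momentPolynomial_le _ _) Nat.strictMono_cast (S := Icc 1 31) (by simp)
  have hj₀ : j ∈ Icc 1 32 := by simp only [Finset.mem_Icc] at hj ⊢; omega
  have hj₁ : j + 1 ∈ Icc 1 32 := by simp only [Finset.mem_Icc] at hj ⊢; omega
  refine ⟨j, hj₀, j + 1, hj₁, by omega, fun i => mul_pos_iff.mp ?_⟩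
  have hne := mul_ne_zero (sub_ne_zero.mpr (havoid i j hj₀)) (sub_ne_zero.mpr (havoid i _ hj₁))
  simp only [eval_momentPolynomial] at hsame
  exact (hsame i).lt_of_ne' hne
end

section
/- For every d ≥ 5, d hyperplanes cannot separate the 2^d points γ_d(1), γ_d(2), ..., γ_d(2^d) on the moment curve in ℝ^d into distinct open cells: for any nonzero linear functionals f₁, ..., f_d : ℝ^d → ℝ and reals c₁, ..., c_d such that fᵢ(γ_d(j)) ≠ cᵢ for all i ∈ {1,...,d} and all j ∈ {1,...,2^d}, there exist distinct j, k ∈ {1,...,2^d} such that for every i ∈ {1,...,d}, the numbers fᵢ(γ_d(j)) − cᵢ and fᵢ(γ_d(k)) − cᵢ have the same sign (both strictly positive or both strictly negative). -/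
/-!
If `d` hyperplanes separated `γ_d(1), …, γ_d(2^d)` into distinct cells, then for every
`j < 2^d` some hyperplane would separate the consecutive points `γ_d(j)` and `γ_d(j + 1)`.
Along the moment curve the `i`-th hyperplane becomes the polynomial `t ↦ fᵢ(γ_d(t)) - cᵢ` of
degree at most `d`, so each of the `2^d - 1` unit intervals `(j, j + 1)` would contain a root of
one of these `d` polynomials. Since the intervals are disjoint, this needs at least `2^d - 1`
roots, whereas there are at most `d²` of them, and `d² < 2^d - 1` once `d ≥ 5`.
-/

open Polynomial

noncomputable def hyperplanePoly (d : ℕ) (f : (Fin d → ℝ) →ₗ[ℝ] ℝ) (c : ℝ) : ℝ[X] :=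
  ∑ k : Fin d, C (f fun j => if k = j then 1 else 0) * X ^ (k.1 + 1) - C c

theorem eval_hyperplanePoly (d : ℕ) (f : (Fin d → ℝ) →ₗ[ℝ] ℝ) (c t : ℝ) :
    (hyperplanePoly d f c).eval t = f (momentCurve d t) - c := by
  rw [LinearMap.pi_apply_eq_sum_univ f (momentCurve d t)]
  simp only [hyperplanePoly, momentCurve, eval_sub, eval_finsetSum, eval_mul, eval_C, eval_pow,
    eval_X, smul_eq_mul, mul_comm]

theorem natDegree_hyperplanePoly_le (d : ℕ) (f : (Fin d → ℝ) →ₗ[ℝ] ℝ) (c : ℝ) :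
    (hyperplanePoly d f c).natDegree ≤ d := by
  refine (natDegree_sub_le _ _).trans (max_le ?_ (by simp))
  exact natDegree_sum_le_of_forall_le _ _ fun k _ => (natDegree_C_mul_X_pow_le _ _).trans k.2

theorem mul_neg_of_ne_zero_of_signs_differ {α : Type*} [Ring α] [LinearOrder α]
    [IsStrictOrderedRing α] {a b : α} (ha : a ≠ 0) (hb : b ≠ 0)
    (h : ¬((0 < a ∧ 0 < b) ∨ (a < 0 ∧ b < 0))) :
    a * b < 0 := by
  rw [mul_neg_iff]
  rcases ha.lt_or_gt with ha | ha <;> rcases hb.lt_or_gt with hb | hb <;> tauto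

theorem exists_mem_Ioo_eq_zero_of_mul_neg {g : ℝ → ℝ} {a b : ℝ} (hab : a ≤ b)
    (hg : ContinuousOn g (Set.Icc a b)) (h : g a * g b < 0) : ∃ x ∈ Set.Ioo a b, g x = 0 := by
  rcases mul_neg_iff.1 h with ⟨ha, hb⟩ | ⟨ha, hb⟩
  · exact intermediate_value_Ioo' hab hg ⟨hb, ha⟩
  · exact intermediate_value_Ioo hab hg ⟨ha, hb⟩

/-- Each polynomial of the family that changes sign on `[j, j + 1]` has a root in `(j, j + 1)`, and
these open intervals are pairwise disjoint. -/
theorem card_le_of_forall_exists_sign_change {ι : Type*} [Fintype ι] (p : ι → ℝ[X]) {n : ℕ}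
    (hdeg : ∀ i, (p i).natDegree ≤ n) (S : Finset ℕ)
    (hS : ∀ j ∈ S, ∃ i, (p i).eval (j : ℝ) * (p i).eval ((j : ℝ) + 1) < 0) :
    S.card ≤ Fintype.card ι * n := by
  set roots := Finset.univ.biUnion fun i => (p i).roots.toFinset
  have hroot : ∀ j ∈ S, ∃ x ∈ Set.Ioo (j : ℝ) (j + 1), x ∈ roots := by
    intro j hj
    obtain ⟨i, hi⟩ := hS j hj
    obtain ⟨x, hx, hx0⟩ :=
      exists_mem_Ioo_eq_zero_of_mul_neg (by linarith) (p i).continuous.continuousOn hi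
    have hp : p i ≠ 0 := by
      intro hp
      simp [hp] at hi
    exact ⟨x, hx, Finset.mem_biUnion.2 ⟨i, Finset.mem_univ i, by simpa [hp] using hx0⟩⟩
  choose! x hx hx_roots using hroot
  calc S.card ≤ roots.card := by
        refine Finset.card_le_card_of_injOn x hx_roots fun j hj k hk hjk => ?_
        have hj := hx j hj
        have hk := hx k hk
        rw [hjk] at hj
        have hjk₁ : j < k + 1 := by exact_mod_cast hj.1.trans hk.2
        have hkj₁ : k < j + 1 := by exact_mod_cast hk.1.trans hj.2
        omega
    _ ≤ ∑ i, (p i).roots.toFinset.card := Finset.card_biUnion_le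
    _ ≤ ∑ _i : ι, n := Finset.sum_le_sum fun i _ =>
        (Multiset.toFinset_card_le _).trans ((p i).card_roots'.trans (hdeg i))
    _ = Fintype.card ι * n := by simp

theorem mul_self_add_one_lt_two_pow {d : ℕ} (hd : 5 ≤ d) : d * d + 1 < 2 ^ d := by
  induction d, hd using Nat.le_induction with
  | base => norm_num
  | succ n hn ih => rw [pow_succ]; nlinarith

theorem d_hyperplanes_cannot_separate_two_pow_d_moment_points_general
    (d : ℕ) (hd : 5 ≤ d) (f : Fin d → ((Fin d → ℝ) →ₗ[ℝ] ℝ))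
    (c : Fin d → ℝ)
    (havoid : ∀ i : Fin d, ∀ j ∈ Finset.Icc (1 : ℕ) (2 ^ d),
      f i (momentCurve d (j : ℝ)) ≠ c i) :
    ∃ j ∈ Finset.Icc (1 : ℕ) (2 ^ d), ∃ k ∈ Finset.Icc (1 : ℕ) (2 ^ d), j ≠ k ∧
      ∀ i : Fin d,
        (0 < f i (momentCurve d (j : ℝ)) - c i ∧
          0 < f i (momentCurve d (k : ℝ)) - c i) ∨
        (f i (momentCurve d (j : ℝ)) - c i < 0 ∧
          f i (momentCurve d (k : ℝ)) - c i < 0) := by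
  by_contra hsep
  have hchange : ∀ j ∈ Finset.Ico (1 : ℕ) (2 ^ d), ∃ i,
      (hyperplanePoly d (f i) (c i)).eval (j : ℝ) *
        (hyperplanePoly d (f i) (c i)).eval ((j : ℝ) + 1) < 0 := by
    intro j hj
    obtain ⟨hj₁, hj₂⟩ := Finset.mem_Ico.1 hj
    have hj : j ∈ Finset.Icc (1 : ℕ) (2 ^ d) := Finset.mem_Icc.2 ⟨hj₁, hj₂.le⟩
    have hj' : j + 1 ∈ Finset.Icc (1 : ℕ) (2 ^ d) := Finset.mem_Icc.2 ⟨by omega, hj₂⟩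
    obtain ⟨i, hi⟩ := not_forall.1 fun h => hsep ⟨j, hj, j + 1, hj', by omega, h⟩
    refine ⟨i, ?_⟩
    have hne := havoid i (j + 1) hj'
    push_cast at hi hne
    simp only [eval_hyperplanePoly]
    exact mul_neg_of_ne_zero_of_signs_differ (sub_ne_zero.2 (havoid i j hj)) (sub_ne_zero.2 hne) hi
  have hcount := card_le_of_forall_exists_sign_change _
    (fun i => natDegree_hyperplanePoly_le d (f i) (c i)) _ hchange
  rw [Nat.card_Ico, Fintype.card_fin] at hcount
  have := mul_self_add_one_lt_two_pow hd
  omega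

/-- For every `d ≥ 5`, `d` hyperplanes cannot separate the `2^d` points
`γ_d(1), …, γ_d(2^d)` on the moment curve in ℝ^d into distinct open cells. -/
theorem d_hyperplanes_cannot_separate_two_pow_d_moment_points
    (d : ℕ) (hd : 5 ≤ d) (f : Fin d → ((Fin d → ℝ) →ₗ[ℝ] ℝ))
    (hf : ∀ i, f i ≠ 0) (c : Fin d → ℝ)
    (havoid : ∀ i : Fin d, ∀ j ∈ Finset.Icc (1 : ℕ) (2 ^ d),
      f i (momentCurve d (j : ℝ)) ≠ c i) :
    ∃ j ∈ Finset.Icc (1 : ℕ) (2 ^ d), ∃ k ∈ Finset.Icc (1 : ℕ) (2 ^ d), j ≠ k ∧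
      ∀ i : Fin d,
        (0 < f i (momentCurve d (j : ℝ)) - c i ∧
          0 < f i (momentCurve d (k : ℝ)) - c i) ∨
        (f i (momentCurve d (j : ℝ)) - c i < 0 ∧
          f i (momentCurve d (k : ℝ)) - c i < 0) :=
  d_hyperplanes_cannot_separate_two_pow_d_moment_points_general d hd f c havoid
end
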